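/- In the super-popularity reduction instance I', every super-popular matching M' satisfies: t is matched to an original vertex (not to d_t), the edge (x,y) is not in M', and consequently (t',d_t) ∈ M' and (x,d_x) ∈ M'. -/
import Mathlib


open Finset
open scoped Classical
noncomputable section

/-- A bipartite preference instance: bipartite (multi)graph `G=(U,W;E)` where each
edge `e` has endpoints `src e ∈ U`, `dst e ∈ W`, and every vertex has a preference
valuation over edges (only values on incident edges are relevant); the valuation of
being unmatched (`∅`) is `0`. -/
structure PrefInst (U W E : Type) where
  src : E → U
  dst : E → W
  pU : U → E → ℝ
  pW : W → E → ℝ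

namespace PrefInst

variable {U W E : Type} [DecidableEq U] [DecidableEq W] [DecidableEq E]

/-- `M` is a matching: no two distinct edges of `M` share an endpoint. -/
def IsMatching (I : PrefInst U W E) (M : Finset E) : Prop :=
  ∀ e ∈ M, ∀ f ∈ M, e ≠ f → I.src e ≠ I.src f ∧ I.dst e ≠ I.dst f

/-- The edge of `M` incident to `u ∈ U` (if any): `M(u)`. -/
def mU (I : PrefInst U W E) (M : Finset E) (u : U) : Option E :=
  (M.filter fun e => I.src e = u).toList.head?

/-- The edge of `M` incident to `w ∈ W` (if any): `M(w)`. -/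
def mW (I : PrefInst U W E) (M : Finset E) (w : W) : Option E :=
  (M.filter fun e => I.dst e = w).toList.head?

/-- Valuation by `u` of a possible partner edge, with `p_u(∅) = 0`. -/
def valU (I : PrefInst U W E) (u : U) : Option E → ℝ
  | none => 0
  | some e => I.pU u e

def valW (I : PrefInst U W E) (w : W) : Option E → ℝ
  | none => 0
  | some e => I.pW w e

/-- `M` is maximal: no edge can be added keeping it a matching. -/
def Maximal (I : PrefInst U W E) (M : Finset E) : Prop :=
  ∀ e ∉ M, ¬ I.IsMatching (insert e M)

/-- Edge `e ∉ M` blocks `M` in the weak-stability sense: both endpoints strictly improve. -/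
def Blocks (I : PrefInst U W E) (M : Finset E) (e : E) : Prop :=
  e ∉ M ∧ I.valU (I.src e) (I.mU M (I.src e)) < I.pU (I.src e) e ∧
    I.valW (I.dst e) (I.mW M (I.dst e)) < I.pW (I.dst e) e

/-- Weak stability: no blocking edge. -/
def WeaklyStable (I : PrefInst U W E) (M : Finset E) : Prop :=
  ∀ e, ¬ I.Blocks M e

/-- Edge `e ∉ M` γ-min blocks `M`: both endpoints improve by at least their γ-threshold. -/
def GBlocks (I : PrefInst U W E) (γU γW : E → ℝ) (M : Finset E) (e : E) : Prop :=
  e ∉ M ∧ I.valU (I.src e) (I.mU M (I.src e)) + γU e ≤ I.pU (I.src e) e ∧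
    I.valW (I.dst e) (I.mW M (I.dst e)) + γW e ≤ I.pW (I.dst e) e

/-- γ-min stability: no γ-min blocking edge. -/
def GMinStable (I : PrefInst U W E) (γU γW : E → ℝ) (M : Finset E) : Prop :=
  ∀ e, ¬ I.GBlocks γU γW M e

/-- Standard vote of `u` comparing `M` to `N`: `+1` if strictly better in `M`,
`-1` if strictly better in `N`, `0` on equal value. -/
def sVoteU (I : PrefInst U W E) (M N : Finset E) (u : U) : ℤ :=
  if I.valU u (I.mU M u) = I.valU u (I.mU N u) then 0
  else if I.valU u (I.mU M u) < I.valU u (I.mU N u) then -1 else 1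

def sVoteW (I : PrefInst U W E) (M N : Finset E) (w : W) : ℤ :=
  if I.valW w (I.mW M w) = I.valW w (I.mW N w) then 0
  else if I.valW w (I.mW M w) < I.valW w (I.mW N w) then -1 else 1

/-- Weak vote of `u`: `0` if same partner, `-1` on strict improvement in `N`,
`+1` otherwise (partner changed without strict improvement). -/
def wVoteU (I : PrefInst U W E) (M N : Finset E) (u : U) : ℤ :=
  if I.mU M u = I.mU N u then 0
  else if I.valU u (I.mU M u) < I.valU u (I.mU N u) then -1 else 1

def wVoteW (I : PrefInst U W E) (M N : Finset E) (w : W) : ℤ :=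
  if I.mW M w = I.mW N w then 0
  else if I.valW w (I.mW M w) < I.valW w (I.mW N w) then -1 else 1

/-- Super vote of `u`: `0` if same partner, `-1` if the new partner is weakly
preferred (and different), `+1` only on strict worsening. -/
def supVoteU (I : PrefInst U W E) (M N : Finset E) (u : U) : ℤ :=
  if I.mU M u = I.mU N u then 0
  else if I.valU u (I.mU M u) ≤ I.valU u (I.mU N u) then -1 else 1

def supVoteW (I : PrefInst U W E) (M N : Finset E) (w : W) : ℤ :=
  if I.mW M w = I.mW N w then 0
  else if I.valW w (I.mW M w) ≤ I.valW w (I.mW N w) then -1 else 1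

/-- γ-vote of `u`: `0` if same partner; `-1` if `p_u(N(u)) ≥ p_u(M(u)) + γ_{N(u)}^u`;
`+1` otherwise (partner changed without a γ-sized improvement). -/
def gVoteU (I : PrefInst U W E) (γU : E → ℝ) (M N : Finset E) (u : U) : ℤ :=
  if I.mU M u = I.mU N u then 0
  else match I.mU N u with
    | none => 1
    | some e => if I.valU u (I.mU M u) + γU e ≤ I.pU u e then -1 else 1

def gVoteW (I : PrefInst U W E) (γW : E → ℝ) (M N : Finset E) (w : W) : ℤ :=
  if I.mW M w = I.mW N w then 0
  else match I.mW N w with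
    | none => 1
    | some e => if I.valW w (I.mW M w) + γW e ≤ I.pW w e then -1 else 1

variable [Fintype U] [Fintype W]

/-- Popularity (standard votes): `M` never loses a head-to-head comparison. -/
def Popular (I : PrefInst U W E) (M : Finset E) : Prop :=
  ∀ N, I.IsMatching N → 0 ≤ (∑ u, I.sVoteU M N u) + ∑ w, I.sVoteW M N w

/-- Weak popularity. -/
def WeaklyPopular (I : PrefInst U W E) (M : Finset E) : Prop :=
  ∀ N, I.IsMatching N → 0 ≤ (∑ u, I.wVoteU M N u) + ∑ w, I.wVoteW M N w

/-- Super popularity. -/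
def SuperPopular (I : PrefInst U W E) (M : Finset E) : Prop :=
  ∀ N, I.IsMatching N → 0 ≤ (∑ u, I.supVoteU M N u) + ∑ w, I.supVoteW M N w

/-- γ-popularity. -/
def GammaPopular (I : PrefInst U W E) (γU γW : E → ℝ) (M : Finset E) : Prop :=
  ∀ N, I.IsMatching N → 0 ≤ (∑ u, I.gVoteU γU M N u) + ∑ w, I.gVoteW γW M N w

end PrefInst
end

namespace PrefInst

variable {U W E : Type} [DecidableEq U] [DecidableEq W] [DecidableEq E]

/-- The super-popularity reduction instance `I'` built from a strict-preference
instance `I` with designated leaf `x ∈ U` (whose unique edge is `exy`, towards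
`y = dst exy`) and forced vertex `t ∈ U`.  New U-side agents: `x' = inr 0`,
`t' = inr 1`; new W-side agents: `d_x = inr 0`, `d_t = inr 1`; new edges:
`inr 0 = (x,d_x)`, `inr 1 = (x',d_x)`, `inr 2 = (t,d_t)`, `inr 3 = (t',d_t)`.
`d_x` prefers `x ≻ x'`; `d_t` has the tie `t ∼ t'`; `d_t` is appended to the end
of `t`'s list (encoded by shifting `t`'s original values up by `1` and valuing
`d_t` at `1/2`), and the entry `y` in `x`'s list becomes the tie `d_x ∼ y`. -/
noncomputable def superRed (I : PrefInst U W E) (x t : U) (exy : E) :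
    PrefInst (U ⊕ Fin 2) (W ⊕ Fin 2) (E ⊕ Fin 4) where
  src := Sum.elim (fun e => Sum.inl (I.src e))
    ![Sum.inl x, Sum.inr 0, Sum.inl t, Sum.inr 1]
  dst := Sum.elim (fun e => Sum.inl (I.dst e))
    ![Sum.inr 0, Sum.inr 0, Sum.inr 1, Sum.inr 1]
  pU := fun v d =>
    match v, d with
    | Sum.inl u, Sum.inl e => if u = t then I.pU u e + 1 else I.pU u e
    | Sum.inl u, Sum.inr j =>
        if j = 0 ∧ u = x then I.pU x exy
        else if j = 2 ∧ u = t then 1 / 2 else 0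
    | Sum.inr i, Sum.inr j =>
        if i = 0 ∧ j = 1 then 1 else if i = 1 ∧ j = 3 then 1 else 0
    | Sum.inr _, Sum.inl _ => 0
  pW := fun v d =>
    match v, d with
    | Sum.inl w, Sum.inl e => I.pW w e
    | Sum.inl _, Sum.inr _ => 0
    | Sum.inr i, Sum.inr j =>
        if i = 0 ∧ j = 0 then 2
        else if i = 0 ∧ j = 1 then 1
        else if i = 1 ∧ (j = 2 ∨ j = 3) then 1 else 0
    | Sum.inr _, Sum.inl _ => 0

end PrefInst

set_option linter.unusedSectionVars false

namespace PrefInst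

variable {U W E : Type} [DecidableEq U] [DecidableEq W] [DecidableEq E]

theorem mU_eq_some' {I : PrefInst U W E} {M : Finset E} (hM : I.IsMatching M)
    {e : E} {u : U} (he : e ∈ M) (hs : I.src e = u) : I.mU M u = some e := by
  have hf : M.filter (fun f => I.src f = u) = {e} := by
    ext f
    simp only [Finset.mem_filter, Finset.mem_singleton]
    constructor
    · rintro ⟨hfM, hfs⟩
      by_contra hne
      exact (hM e he f hfM (Ne.symm hne)).1 (hs.trans hfs.symm)
    · rintro rfl; exact ⟨he, hs⟩
  rw [mU, hf, Finset.toList_singleton]; rfl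

theorem mU_eq_none' {I : PrefInst U W E} {M : Finset E}
    {u : U} (h : ∀ e ∈ M, I.src e ≠ u) : I.mU M u = none := by
  have hf : M.filter (fun f => I.src f = u) = ∅ := by
    rw [Finset.filter_eq_empty_iff]; exact h
  rw [mU, hf]; simp

theorem mW_eq_some' {I : PrefInst U W E} {M : Finset E} (hM : I.IsMatching M)
    {e : E} {w : W} (he : e ∈ M) (hs : I.dst e = w) : I.mW M w = some e := by
  have hf : M.filter (fun f => I.dst f = w) = {e} := by
    ext f
    simp only [Finset.mem_filter, Finset.mem_singleton]
    constructor
    · rintro ⟨hfM, hfs⟩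
      by_contra hne
      exact (hM e he f hfM (Ne.symm hne)).2 (hs.trans hfs.symm)
    · rintro rfl; exact ⟨he, hs⟩
  rw [mW, hf, Finset.toList_singleton]; rfl

theorem mW_eq_none' {I : PrefInst U W E} {M : Finset E}
    {w : W} (h : ∀ e ∈ M, I.dst e ≠ w) : I.mW M w = none := by
  have hf : M.filter (fun f => I.dst f = w) = ∅ := by
    rw [Finset.filter_eq_empty_iff]; exact h
  rw [mW, hf]; simp

theorem mU_congr' {I : PrefInst U W E} {M N : Finset E} {u : U}
    (h : ∀ e, I.src e = u → (e ∈ M ↔ e ∈ N)) : I.mU M u = I.mU N u := by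
  have : M.filter (fun f => I.src f = u) = N.filter (fun f => I.src f = u) := by
    ext f; simp only [Finset.mem_filter]
    constructor
    · rintro ⟨h1, h2⟩; exact ⟨(h f h2).mp h1, h2⟩
    · rintro ⟨h1, h2⟩; exact ⟨(h f h2).mpr h1, h2⟩
  rw [mU, mU, this]

theorem mW_congr' {I : PrefInst U W E} {M N : Finset E} {w : W}
    (h : ∀ e, I.dst e = w → (e ∈ M ↔ e ∈ N)) : I.mW M w = I.mW N w := by
  have : M.filter (fun f => I.dst f = w) = N.filter (fun f => I.dst f = w) := by
    ext f; simp only [Finset.mem_filter]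
    constructor
    · rintro ⟨h1, h2⟩; exact ⟨(h f h2).mp h1, h2⟩
    · rintro ⟨h1, h2⟩; exact ⟨(h f h2).mpr h1, h2⟩
  rw [mW, mW, this]

theorem supVoteU_zero' {I : PrefInst U W E} {M N : Finset E} {u : U}
    (h : I.mU M u = I.mU N u) : I.supVoteU M N u = 0 := by
  simp [supVoteU, h]

theorem supVoteW_zero' {I : PrefInst U W E} {M N : Finset E} {w : W}
    (h : I.mW M w = I.mW N w) : I.supVoteW M N w = 0 := by
  simp [supVoteW, h]

theorem isMatching_subset' {I : PrefInst U W E} {M N : Finset E}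
    (h : N ⊆ M) (hM : I.IsMatching M) : I.IsMatching N :=
  fun e he f hf hne => hM e (h he) f (h hf) hne

theorem isMatching_insert' {I : PrefInst U W E} {M : Finset E} {b : E}
    (hM : I.IsMatching M) (h : ∀ f ∈ M, I.src f ≠ I.src b ∧ I.dst f ≠ I.dst b) :
    I.IsMatching (insert b M) := by
  intro e he f hf hne
  rcases Finset.mem_insert.mp he with rfl | he'
  · rcases Finset.mem_insert.mp hf with rfl | hf'
    · exact absurd rfl hne
    · exact ⟨Ne.symm (h f hf').1, Ne.symm (h f hf').2⟩
  · rcases Finset.mem_insert.mp hf with rfl | hf'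
    · exact h e he'
    · exact hM e he' f hf' hne

theorem sum_votes_eq' {α : Type*} [Fintype α] (f : α → ℤ) (s : Finset α)
    (h : ∀ a ∉ s, f a = 0) : ∑ a, f a = ∑ a ∈ s, f a :=
  (Finset.sum_subset (Finset.subset_univ s) (fun a _ ha => h a ha)).symm

end PrefInst

namespace PrefInst
set_option linter.unusedSectionVars false

section SR
variable {U W E : Type} [DecidableEq U] [DecidableEq W] [DecidableEq E]
variable (I : PrefInst U W E) (x t : U) (exy : E)


theorem sr_src_inl (e : E) : (I.superRed x t exy).src (Sum.inl e) = Sum.inl (I.src e) := rfl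
theorem sr_dst_inl (e : E) : (I.superRed x t exy).dst (Sum.inl e) = Sum.inl (I.dst e) := rfl
theorem sr_src_0 : (I.superRed x t exy).src (Sum.inr 0) = Sum.inl x := rfl
theorem sr_src_1 : (I.superRed x t exy).src (Sum.inr 1) = Sum.inr 0 := rfl
theorem sr_src_2 : (I.superRed x t exy).src (Sum.inr 2) = Sum.inl t := rfl
theorem sr_src_3 : (I.superRed x t exy).src (Sum.inr 3) = Sum.inr 1 := rfl
theorem sr_dst_0 : (I.superRed x t exy).dst (Sum.inr 0) = Sum.inr 0 := rfl
theorem sr_dst_1 : (I.superRed x t exy).dst (Sum.inr 1) = Sum.inr 0 := rfl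
theorem sr_dst_2 : (I.superRed x t exy).dst (Sum.inr 2) = Sum.inr 1 := rfl
theorem sr_dst_3 : (I.superRed x t exy).dst (Sum.inr 3) = Sum.inr 1 := rfl

-- classification lemmas
theorem sr_src_eq_inr0 {f : E ⊕ Fin 4} (h : (I.superRed x t exy).src f = Sum.inr 0) : f = Sum.inr 1 := by
  rcases f with e | j
  · simp [superRed] at h
  · fin_cases j <;> simp_all [superRed] <;> rfl

theorem sr_src_eq_inr1 {f : E ⊕ Fin 4} (h : (I.superRed x t exy).src f = Sum.inr 1) : f = Sum.inr 3 := by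
  rcases f with e | j
  · simp [superRed] at h
  · fin_cases j <;> simp_all [superRed] <;> rfl

theorem sr_dst_eq_inr0 {f : E ⊕ Fin 4} (h : (I.superRed x t exy).dst f = Sum.inr 0) :
    f = Sum.inr 0 ∨ f = Sum.inr 1 := by
  rcases f with e | j
  · simp [superRed] at h
  · fin_cases j <;> simp_all [superRed]

theorem sr_dst_eq_inr1 {f : E ⊕ Fin 4} (h : (I.superRed x t exy).dst f = Sum.inr 1) :
    f = Sum.inr 2 ∨ f = Sum.inr 3 := by
  rcases f with e | j
  · simp [superRed] at h
  · fin_cases j <;> simp_all [superRed]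

theorem sr_src_eq_inl {f : E ⊕ Fin 4} {u : U} (h : (I.superRed x t exy).src f = Sum.inl u) :
    (∃ e, f = Sum.inl e ∧ I.src e = u) ∨ (u = x ∧ f = Sum.inr 0) ∨ (u = t ∧ f = Sum.inr 2) := by
  rcases f with e | j
  · left; exact ⟨e, rfl, by simpa [superRed] using h⟩
  · fin_cases j <;> simp_all [superRed]

theorem sr_dst_eq_inl {f : E ⊕ Fin 4} {w : W} (h : (I.superRed x t exy).dst f = Sum.inl w) :
    ∃ e, f = Sum.inl e ∧ I.dst e = w := by
  rcases f with e | j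
  · exact ⟨e, rfl, by simpa [superRed] using h⟩
  · fin_cases j <;> simp_all [superRed]

-- valuation lemmas
theorem sr_pU_inl_inl (u : U) (e : E) (hu : u ≠ t) :
    (I.superRed x t exy).pU (Sum.inl u) (Sum.inl e) = I.pU u e := by simp [superRed, hu]
theorem sr_pU_t_inl (e : E) : (I.superRed x t exy).pU (Sum.inl t) (Sum.inl e) = I.pU t e + 1 := by
  simp [superRed]
theorem sr_pU_x_0 : (I.superRed x t exy).pU (Sum.inl x) (Sum.inr 0) = I.pU x exy := by
  simp [superRed]
theorem sr_pU_t_2 : (I.superRed x t exy).pU (Sum.inl t) (Sum.inr 2) = 1/2 := by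
  have hxt : ¬ ((2 : Fin 4) = 0) := by decide
  simp [superRed]
theorem sr_pU_x'_1 : (I.superRed x t exy).pU (Sum.inr 0) (Sum.inr 1) = 1 := by simp [superRed]
theorem sr_pU_t'_3 : (I.superRed x t exy).pU (Sum.inr 1) (Sum.inr 3) = 1 := by simp [superRed]
theorem sr_pW_inl (w : W) (e : E) : (I.superRed x t exy).pW (Sum.inl w) (Sum.inl e) = I.pW w e := rfl
theorem sr_pW_dx_0 : (I.superRed x t exy).pW (Sum.inr 0) (Sum.inr 0) = 2 := by simp [superRed]
theorem sr_pW_dx_1 : (I.superRed x t exy).pW (Sum.inr 0) (Sum.inr 1) = 1 := by simp [superRed]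
theorem sr_pW_dt_2 : (I.superRed x t exy).pW (Sum.inr 1) (Sum.inr 2) = 1 := by simp [superRed]
theorem sr_pW_dt_3 : (I.superRed x t exy).pW (Sum.inr 1) (Sum.inr 3) = 1 := by simp [superRed]

end SR
end PrefInst

namespace PrefInst
set_option linter.unusedSectionVars false
variable {U W E : Type} [DecidableEq U] [DecidableEq W] [DecidableEq E]

theorem supVoteU_le_one' (I : PrefInst U W E) (M N : Finset E) (u : U) :
    I.supVoteU M N u ≤ 1 := by
  rw [supVoteU]; split
  · norm_num
  · split <;> norm_num

theorem supVoteW_le_one' (I : PrefInst U W E) (M N : Finset E) (w : W) :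
    I.supVoteW M N w ≤ 1 := by
  rw [supVoteW]; split
  · norm_num
  · split <;> norm_num

end PrefInst

open PrefInst in
/-- In the super-popularity reduction instance `I'`, every
super-popular matching `M'` satisfies: `t` is matched to an original vertex
(not to `d_t`), the edge `(x,y)` is not in `M'`, and consequently
`(t',d_t) ∈ M'` and `(x,d_x) ∈ M'`. -/
theorem superRed_super_popular_structure
    {U W E : Type} [DecidableEq U] [DecidableEq W] [DecidableEq E]
    [Fintype U] [Fintype W]
    (I : PrefInst U W E)
    -- strict preferences, all edges acceptable (unmatched is strictly worst)
    (hpU : ∀ u e, 0 < I.pU u e) (hpW : ∀ w e, 0 < I.pW w e)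
    (hstrictU : ∀ u e f, I.src e = u → I.src f = u → I.pU u e = I.pU u f → e = f)
    (hstrictW : ∀ w e f, I.dst e = w → I.dst f = w → I.pW w e = I.pW w f → e = f)
    (x t : U) (exy : E) (z : U) (eyz : E)
    (hxt : x ≠ t)
    -- x is a leaf whose unique edge is exy = (x,y), y = I.dst exy
    (hx : I.src exy = x) (hleaf : ∀ e, I.src e = x → e = exy)
    -- y's only other neighbour is z, and y,z are each other's first choices
    (hz : I.src eyz = z) (hy : I.dst eyz = I.dst exy) (hzx : z ≠ x)
    (honly : ∀ e, I.dst e = I.dst exy → e = exy ∨ I.src e = z)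
    (hzfirst : ∀ e, I.src e = z → I.pU z e ≤ I.pU z eyz)
    (hyfirst : ∀ e, I.dst e = I.dst exy → I.pW (I.dst exy) e ≤ I.pW (I.dst exy) eyz)
    (M' : Finset (E ⊕ Fin 4))
    (hM' : (I.superRed x t exy).IsMatching M')
    (hpop : (I.superRed x t exy).SuperPopular M') :
    (∃ e₀ : E, Sum.inl e₀ ∈ M' ∧ I.src e₀ = t) ∧
    Sum.inl exy ∉ M' ∧
    (Sum.inr 3 : E ⊕ Fin 4) ∈ M' ∧ (Sum.inr 0 : E ⊕ Fin 4) ∈ M' := by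
  -- Step A : Sum.inr 2 ∉ M'
  have h2 : (Sum.inr 2 : E ⊕ Fin 4) ∉ M' := by
    intro h2
    have h3 : (Sum.inr 3 : E ⊕ Fin 4) ∉ M' := by
      intro h3
      exact (hM' _ h2 _ h3 (by simp)).2 rfl
    set N := insert (Sum.inr 3 : E ⊕ Fin 4) (M'.erase (Sum.inr 2)) with hN
    have hsub : M'.erase (Sum.inr 2) ⊆ M' := Finset.erase_subset _ _
    have hNm : (I.superRed x t exy).IsMatching N := by
      apply isMatching_insert' (isMatching_subset' hsub hM')
      intro f hf
      constructor
      · intro hs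
        have := sr_src_eq_inr1 I x t exy hs
        subst this
        exact h3 (hsub hf)
      · intro hd
        rcases sr_dst_eq_inr1 I x t exy hd with rfl | rfl
        · exact (Finset.mem_erase.mp hf).1 rfl
        · exact h3 (hsub hf)
    -- partner computations
    have hmUt : (I.superRed x t exy).mU M' (Sum.inl t) = some (Sum.inr 2) :=
      mU_eq_some' hM' h2 rfl
    have hmUtN : (I.superRed x t exy).mU N (Sum.inl t) = none := by
      apply mU_eq_none'
      intro f hf hs
      rcases Finset.mem_insert.mp hf with rfl | hf'
      · exact absurd hs (by simp [superRed])
      · exact (hM' f (hsub hf') _ h2 (Finset.mem_erase.mp hf').1).1 hs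
    have hmUt'M : (I.superRed x t exy).mU M' (Sum.inr 1) = none := by
      apply mU_eq_none'
      intro f hf hs
      have := sr_src_eq_inr1 I x t exy hs
      subst this; exact h3 hf
    have hmUt'N : (I.superRed x t exy).mU N (Sum.inr 1) = some (Sum.inr 3) :=
      mU_eq_some' hNm (Finset.mem_insert_self _ _) rfl
    have hmWdt : (I.superRed x t exy).mW M' (Sum.inr 1) = some (Sum.inr 2) :=
      mW_eq_some' hM' h2 rfl
    have hmWdtN : (I.superRed x t exy).mW N (Sum.inr 1) = some (Sum.inr 3) :=
      mW_eq_some' hNm (Finset.mem_insert_self _ _) rfl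
    have hU : ∑ u, (I.superRed x t exy).supVoteU M' N u
        = ∑ u ∈ ({Sum.inl t, Sum.inr 1} : Finset (U ⊕ Fin 2)),
            (I.superRed x t exy).supVoteU M' N u := by
      apply sum_votes_eq'
      intro u hu
      simp only [Finset.mem_insert, Finset.mem_singleton, not_or] at hu
      apply supVoteU_zero'
      apply mU_congr'
      intro f hsf
      have hf2 : f ≠ Sum.inr 2 := by rintro rfl; exact hu.1 hsf.symm
      have hf3 : f ≠ Sum.inr 3 := by rintro rfl; exact hu.2 hsf.symm
      simp [hN, Finset.mem_insert, Finset.mem_erase, hf2, hf3]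
    have hW : ∑ w, (I.superRed x t exy).supVoteW M' N w
        = ∑ w ∈ ({Sum.inr 1} : Finset (W ⊕ Fin 2)),
            (I.superRed x t exy).supVoteW M' N w := by
      apply sum_votes_eq'
      intro w hw
      simp only [Finset.mem_singleton] at hw
      apply supVoteW_zero'
      apply mW_congr'
      intro f hsf
      have hf2 : f ≠ Sum.inr 2 := by rintro rfl; exact hw hsf.symm
      have hf3 : f ≠ Sum.inr 3 := by rintro rfl; exact hw hsf.symm
      simp [hN, Finset.mem_insert, Finset.mem_erase, hf2, hf3]
    have v1 : (I.superRed x t exy).supVoteU M' N (Sum.inl t) = 1 := by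
      rw [supVoteU, hmUt, hmUtN, if_neg (by simp), if_neg (by norm_num [valU, sr_pU_t_2])]
    have v2 : (I.superRed x t exy).supVoteU M' N (Sum.inr 1) = -1 := by
      rw [supVoteU, hmUt'M, hmUt'N, if_neg (by simp), if_pos (by norm_num [valU, sr_pU_t'_3])]
    have v3 : (I.superRed x t exy).supVoteW M' N (Sum.inr 1) = -1 := by
      rw [supVoteW, hmWdt, hmWdtN, if_neg (by simp), if_pos (by norm_num [valW, sr_pW_dt_2, sr_pW_dt_3])]
    have := hpop N hNm
    rw [hU, hW, Finset.sum_pair (by simp), Finset.sum_singleton, v1, v2, v3] at this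
    norm_num at this
  -- Step B : Sum.inr 3 ∈ M'
  have h3 : (Sum.inr 3 : E ⊕ Fin 4) ∈ M' := by
    by_contra h3
    set N := insert (Sum.inr 3 : E ⊕ Fin 4) M' with hN
    have hNm : (I.superRed x t exy).IsMatching N := by
      apply isMatching_insert' hM'
      intro f hf
      constructor
      · intro hs
        have := sr_src_eq_inr1 I x t exy hs
        subst this; exact h3 hf
      · intro hd
        rcases sr_dst_eq_inr1 I x t exy hd with rfl | rfl
        · exact h2 hf
        · exact h3 hf
    have hmUt'M : (I.superRed x t exy).mU M' (Sum.inr 1) = none := by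
      apply mU_eq_none'
      intro f hf hs
      have := sr_src_eq_inr1 I x t exy hs
      subst this; exact h3 hf
    have hmUt'N : (I.superRed x t exy).mU N (Sum.inr 1) = some (Sum.inr 3) :=
      mU_eq_some' hNm (Finset.mem_insert_self _ _) rfl
    have hmWdtM : (I.superRed x t exy).mW M' (Sum.inr 1) = none := by
      apply mW_eq_none'
      intro f hf hd
      rcases sr_dst_eq_inr1 I x t exy hd with rfl | rfl
      · exact h2 hf
      · exact h3 hf
    have hmWdtN : (I.superRed x t exy).mW N (Sum.inr 1) = some (Sum.inr 3) :=
      mW_eq_some' hNm (Finset.mem_insert_self _ _) rfl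
    have hU : ∑ u, (I.superRed x t exy).supVoteU M' N u
        = ∑ u ∈ ({Sum.inr 1} : Finset (U ⊕ Fin 2)),
            (I.superRed x t exy).supVoteU M' N u := by
      apply sum_votes_eq'
      intro u hu
      simp only [Finset.mem_singleton] at hu
      apply supVoteU_zero'
      apply mU_congr'
      intro f hsf
      have hf3 : f ≠ Sum.inr 3 := by rintro rfl; exact hu hsf.symm
      simp [hN, Finset.mem_insert, hf3]
    have hW : ∑ w, (I.superRed x t exy).supVoteW M' N w
        = ∑ w ∈ ({Sum.inr 1} : Finset (W ⊕ Fin 2)),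
            (I.superRed x t exy).supVoteW M' N w := by
      apply sum_votes_eq'
      intro w hw
      simp only [Finset.mem_singleton] at hw
      apply supVoteW_zero'
      apply mW_congr'
      intro f hsf
      have hf3 : f ≠ Sum.inr 3 := by rintro rfl; exact hw hsf.symm
      simp [hN, Finset.mem_insert, hf3]
    have v1 : (I.superRed x t exy).supVoteU M' N (Sum.inr 1) = -1 := by
      rw [supVoteU, hmUt'M, hmUt'N, if_neg (by simp),
        if_pos (by norm_num [valU, sr_pU_t'_3])]
    have v2 : (I.superRed x t exy).supVoteW M' N (Sum.inr 1) = -1 := by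
      rw [supVoteW, hmWdtM, hmWdtN, if_neg (by simp),
        if_pos (by norm_num [valW, sr_pW_dt_3])]
    have := hpop N hNm
    rw [hU, hW, Finset.sum_singleton, Finset.sum_singleton, v1, v2] at this
    norm_num at this
  -- Step C : t is matched to an original edge
  have hC : ∃ e₀ : E, Sum.inl e₀ ∈ M' ∧ I.src e₀ = t := by
    by_contra ht
    push_neg at ht
    have htnone : ∀ f ∈ M', (I.superRed x t exy).src f ≠ Sum.inl t := by
      intro f hf hs
      rcases sr_src_eq_inl I x t exy hs with ⟨e, rfl, he⟩ | ⟨hxx, rfl⟩ | ⟨_, rfl⟩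
      · exact ht e hf he
      · exact hxt hxx.symm
      · exact h2 hf
    set N := insert (Sum.inr 2 : E ⊕ Fin 4) (M'.erase (Sum.inr 3)) with hN
    have hsub : M'.erase (Sum.inr 3) ⊆ M' := Finset.erase_subset _ _
    have hNm : (I.superRed x t exy).IsMatching N := by
      apply isMatching_insert' (isMatching_subset' hsub hM')
      intro f hf
      constructor
      · intro hs
        exact htnone f (hsub hf) hs
      · intro hd
        rcases sr_dst_eq_inr1 I x t exy hd with rfl | rfl
        · exact h2 (hsub hf)
        · exact (Finset.mem_erase.mp hf).1 rfl
    have hmUtM : (I.superRed x t exy).mU M' (Sum.inl t) = none := mU_eq_none' htnone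
    have hmUtN : (I.superRed x t exy).mU N (Sum.inl t) = some (Sum.inr 2) :=
      mU_eq_some' hNm (Finset.mem_insert_self _ _) rfl
    have hmUt'M : (I.superRed x t exy).mU M' (Sum.inr 1) = some (Sum.inr 3) :=
      mU_eq_some' hM' h3 rfl
    have hmUt'N : (I.superRed x t exy).mU N (Sum.inr 1) = none := by
      apply mU_eq_none'
      intro f hf hs
      have := sr_src_eq_inr1 I x t exy hs
      subst this
      rcases Finset.mem_insert.mp hf with h | h
      · exact absurd h (by simp)
      · exact (Finset.mem_erase.mp h).1 rfl
    have hmWdtM : (I.superRed x t exy).mW M' (Sum.inr 1) = some (Sum.inr 3) :=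
      mW_eq_some' hM' h3 rfl
    have hmWdtN : (I.superRed x t exy).mW N (Sum.inr 1) = some (Sum.inr 2) :=
      mW_eq_some' hNm (Finset.mem_insert_self _ _) rfl
    have hU : ∑ u, (I.superRed x t exy).supVoteU M' N u
        = ∑ u ∈ ({Sum.inl t, Sum.inr 1} : Finset (U ⊕ Fin 2)),
            (I.superRed x t exy).supVoteU M' N u := by
      apply sum_votes_eq'
      intro u hu
      simp only [Finset.mem_insert, Finset.mem_singleton, not_or] at hu
      apply supVoteU_zero'
      apply mU_congr'
      intro f hsf
      have hf2 : f ≠ Sum.inr 2 := by rintro rfl; exact hu.1 hsf.symm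
      have hf3 : f ≠ Sum.inr 3 := by rintro rfl; exact hu.2 hsf.symm
      simp [hN, Finset.mem_insert, Finset.mem_erase, hf2, hf3]
    have hW : ∑ w, (I.superRed x t exy).supVoteW M' N w
        = ∑ w ∈ ({Sum.inr 1} : Finset (W ⊕ Fin 2)),
            (I.superRed x t exy).supVoteW M' N w := by
      apply sum_votes_eq'
      intro w hw
      simp only [Finset.mem_singleton] at hw
      apply supVoteW_zero'
      apply mW_congr'
      intro f hsf
      have hf2 : f ≠ Sum.inr 2 := by rintro rfl; exact hw hsf.symm
      have hf3 : f ≠ Sum.inr 3 := by rintro rfl; exact hw hsf.symm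
      simp [hN, Finset.mem_insert, Finset.mem_erase, hf2, hf3]
    have v1 : (I.superRed x t exy).supVoteU M' N (Sum.inl t) = -1 := by
      rw [supVoteU, hmUtM, hmUtN, if_neg (by simp),
        if_pos (by norm_num [valU, sr_pU_t_2])]
    have v2 : (I.superRed x t exy).supVoteU M' N (Sum.inr 1) = 1 := by
      rw [supVoteU, hmUt'M, hmUt'N, if_neg (by simp),
        if_neg (by norm_num [valU, sr_pU_t'_3])]
    have v3 : (I.superRed x t exy).supVoteW M' N (Sum.inr 1) = -1 := by
      rw [supVoteW, hmWdtM, hmWdtN, if_neg (by simp),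
        if_pos (by norm_num [valW, sr_pW_dt_2, sr_pW_dt_3])]
    have := hpop N hNm
    rw [hU, hW, Finset.sum_pair (by simp), Finset.sum_singleton, v1, v2, v3] at this
    norm_num at this
  -- Step D : Sum.inl exy ∉ M'
  have hnexz : exy ≠ eyz := by
    intro h; apply hzx; rw [← hz, ← h, hx]
  have hD : Sum.inl exy ∉ M' := by
    intro hxy
    have h0 : (Sum.inr 0 : E ⊕ Fin 4) ∉ M' := by
      intro h0
      exact (hM' _ hxy _ h0 (by simp)).1 (by rw [sr_src_inl, hx]; rfl)
    set B := M'.filter (fun f => (I.superRed x t exy).src f ≠ Sum.inl x ∧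
        (I.superRed x t exy).src f ≠ Sum.inl z ∧
        (I.superRed x t exy).dst f ≠ Sum.inr 0) with hB
    have hBsub : B ⊆ M' := Finset.filter_subset _ _
    set N := insert (Sum.inl eyz) (insert (Sum.inr 0 : E ⊕ Fin 4) B) with hN
    have hNm : (I.superRed x t exy).IsMatching N := by
      apply isMatching_insert'
      · apply isMatching_insert' (isMatching_subset' hBsub hM')
        intro f hf
        have hc := (Finset.mem_filter.mp hf).2
        exact ⟨hc.1, hc.2.2⟩
      · intro f hf
        rcases Finset.mem_insert.mp hf with rfl | hf'
        · constructor
          · rw [sr_src_0, sr_src_inl, hz]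
            intro h
            exact hzx (Sum.inl.inj h).symm
          · rw [sr_dst_0, sr_dst_inl]; simp
        · have hc := (Finset.mem_filter.mp hf').2
          constructor
          · rw [sr_src_inl, hz]; exact hc.2.1
          · rw [sr_dst_inl]
            intro hd
            obtain ⟨e, rfl, hde⟩ := sr_dst_eq_inl I x t exy hd
            rw [hy] at hde
            rcases honly e hde with rfl | hsez
            · exact hc.1 (by rw [sr_src_inl, hx])
            · exact hc.2.1 (by rw [sr_src_inl, hsez])
    -- partner facts independent of the case split
    have hmUxM : (I.superRed x t exy).mU M' (Sum.inl x) = some (Sum.inl exy) :=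
      mU_eq_some' hM' hxy (by rw [sr_src_inl, hx])
    have hmUxN : (I.superRed x t exy).mU N (Sum.inl x) = some (Sum.inr 0) :=
      mU_eq_some' hNm (Finset.mem_insert_of_mem (Finset.mem_insert_self _ _)) rfl
    have hmUzN : (I.superRed x t exy).mU N (Sum.inl z) = some (Sum.inl eyz) :=
      mU_eq_some' hNm (Finset.mem_insert_self _ _) (by rw [sr_src_inl, hz])
    have hmWyM : (I.superRed x t exy).mW M' (Sum.inl (I.dst exy)) = some (Sum.inl exy) :=
      mW_eq_some' hM' hxy (by rw [sr_dst_inl])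
    have hmWyN : (I.superRed x t exy).mW N (Sum.inl (I.dst exy)) = some (Sum.inl eyz) :=
      mW_eq_some' hNm (Finset.mem_insert_self _ _) (by rw [sr_dst_inl, hy])
    have hmWdxN : (I.superRed x t exy).mW N (Sum.inr 0) = some (Sum.inr 0) :=
      mW_eq_some' hNm (Finset.mem_insert_of_mem (Finset.mem_insert_self _ _)) rfl
    have hmWdxM : (I.superRed x t exy).mW M' (Sum.inr 0) = none ∨
        (I.superRed x t exy).mW M' (Sum.inr 0) = some (Sum.inr 1) := by
      by_cases h1 : (Sum.inr 1 : E ⊕ Fin 4) ∈ M'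
      · right; exact mW_eq_some' hM' h1 rfl
      · left
        apply mW_eq_none'
        intro f hf hd
        rcases sr_dst_eq_inr0 I x t exy hd with rfl | rfl
        · exact h0 hf
        · exact h1 hf
    -- votes independent of the case split
    have vx : (I.superRed x t exy).supVoteU M' N (Sum.inl x) = -1 := by
      rw [supVoteU, hmUxM, hmUxN, if_neg (by simp),
        if_pos (by rw [valU, valU, sr_pU_inl_inl I x t exy x exy (by exact hxt), sr_pU_x_0])]
    have vy : (I.superRed x t exy).supVoteW M' N (Sum.inl (I.dst exy)) = -1 := by
      rw [supVoteW, hmWyM, hmWyN, if_neg (by simp [hnexz]),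
        if_pos (by rw [valW, valW, sr_pW_inl, sr_pW_inl]; exact hyfirst exy rfl)]
    have vdx : (I.superRed x t exy).supVoteW M' N (Sum.inr 0) = -1 := by
      rcases hmWdxM with h | h <;>
        rw [supVoteW, h, hmWdxN, if_neg (by simp),
          if_pos (by norm_num [valW, sr_pW_dx_0, sr_pW_dx_1])]
    have hzval : ∀ e, I.src e = z →
        (I.superRed x t exy).pU (Sum.inl z) (Sum.inl e) ≤
        (I.superRed x t exy).pU (Sum.inl z) (Sum.inl eyz) := by
      intro e he
      by_cases hzt : z = t
      · subst hzt; rw [sr_pU_t_inl, sr_pU_t_inl]; linarith [hzfirst e he]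
      · rw [sr_pU_inl_inl I x t exy z e hzt, sr_pU_inl_inl I x t exy z eyz hzt]
        exact hzfirst e he
    have hzval0 : (0 : ℝ) ≤ (I.superRed x t exy).pU (Sum.inl z) (Sum.inl eyz) := by
      by_cases hzt : z = t
      · subst hzt; rw [sr_pU_t_inl]; linarith [hpU z eyz]
      · rw [sr_pU_inl_inl I x t exy z eyz hzt]; linarith [hpU z eyz]
    -- generic U-vertices vote 0
    have hUgen : ∀ u ∉ ({Sum.inl x, Sum.inl z, Sum.inr 0} : Finset (U ⊕ Fin 2)),
        (I.superRed x t exy).supVoteU M' N u = 0 := by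
      intro u hu
      simp only [Finset.mem_insert, Finset.mem_singleton, not_or] at hu
      apply supVoteU_zero'
      apply mU_congr'
      intro f hsf
      constructor
      · intro hf
        refine Finset.mem_insert_of_mem (Finset.mem_insert_of_mem ?_)
        refine Finset.mem_filter.mpr ⟨hf, ?_, ?_, ?_⟩
        · intro h; exact hu.1 (hsf.symm.trans h)
        · intro h; exact hu.2.1 (hsf.symm.trans h)
        · intro hd
          rcases sr_dst_eq_inr0 I x t exy hd with rfl | rfl
          · exact hu.1 hsf.symm
          · exact hu.2.2 hsf.symm
      · intro hf
        rcases Finset.mem_insert.mp hf with rfl | hf'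
        · rw [sr_src_inl, hz] at hsf
          exact absurd hsf.symm hu.2.1
        · rcases Finset.mem_insert.mp hf' with rfl | hf''
          · exact absurd hsf.symm hu.1
          · exact hBsub hf''
    have hUsum : ∑ u, (I.superRed x t exy).supVoteU M' N u =
        (I.superRed x t exy).supVoteU M' N (Sum.inl x) +
        (I.superRed x t exy).supVoteU M' N (Sum.inl z) +
        (I.superRed x t exy).supVoteU M' N (Sum.inr 0) := by
      rw [sum_votes_eq' _ _ hUgen, Finset.sum_insert (by
          simp only [Finset.mem_insert, Finset.mem_singleton]
          push_neg
          exact ⟨by simpa using Ne.symm hzx, by simp⟩),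
        Finset.sum_pair (by simp)]
      ring
    have hbx' := supVoteU_le_one' (I.superRed x t exy) M' N (Sum.inr 0)
    -- case split on whether z is matched in M'
    by_cases hzm : ∃ e, Sum.inl e ∈ M' ∧ I.src e = z
    · obtain ⟨ez, hez, hsez⟩ := hzm
      have hnezx : ez ≠ exy := by
        intro h; apply hzx; rw [← hsez, h, hx]
      have hnezyz : Sum.inl ez ≠ (Sum.inl eyz : E ⊕ Fin 4) := by
        intro h
        have h' : ez = eyz := Sum.inl.inj h
        subst h'
        exact (hM' _ hez _ hxy (by simp [hnezx])).2
          (by rw [sr_dst_inl, sr_dst_inl, hy])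
      have hwzy : I.dst ez ≠ I.dst exy := by
        intro h
        exact (hM' _ hez _ hxy (by simp [hnezx])).2
          (by rw [sr_dst_inl, sr_dst_inl, h])
      have hzuniq : ∀ e, Sum.inl e ∈ M' → I.src e = z → e = ez := by
        intro e he hse
        by_contra hne
        exact (hM' _ he _ hez (by simp [hne])).1
          (by rw [sr_src_inl, sr_src_inl, hse, hsez])
      have hmUzM : (I.superRed x t exy).mU M' (Sum.inl z) = some (Sum.inl ez) :=
        mU_eq_some' hM' hez (by rw [sr_src_inl, hsez])
      have vz : (I.superRed x t exy).supVoteU M' N (Sum.inl z) = -1 := by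
        rw [supVoteU, hmUzM, hmUzN, if_neg (by simp [hnezyz]),
          if_pos (by rw [valU, valU]; exact hzval ez hsez)]
      have hmWwM : (I.superRed x t exy).mW M' (Sum.inl (I.dst ez)) = some (Sum.inl ez) :=
        mW_eq_some' hM' hez (by rw [sr_dst_inl])
      have hmWwN : (I.superRed x t exy).mW N (Sum.inl (I.dst ez)) = none := by
        apply mW_eq_none'
        intro f hf hd
        rcases Finset.mem_insert.mp hf with rfl | hf'
        · rw [sr_dst_inl] at hd
          have h' := Sum.inl.inj hd
          rw [hy] at h'
          exact hwzy h'.symm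
        · rcases Finset.mem_insert.mp hf' with rfl | hf''
          · rw [sr_dst_0] at hd; exact absurd hd (by simp)
          · obtain ⟨hfM, hc⟩ := Finset.mem_filter.mp hf''
            obtain ⟨e, rfl, hde⟩ := sr_dst_eq_inl I x t exy hd
            have he' : e = ez := by
              by_contra hne
              exact (hM' _ hfM _ hez (by simp [hne])).2
                (by rw [sr_dst_inl, sr_dst_inl, hde])
            subst he'
            exact hc.2.1 (by rw [sr_src_inl, hsez])
      have vw : (I.superRed x t exy).supVoteW M' N (Sum.inl (I.dst ez)) = 1 := by
        rw [supVoteW, hmWwM, hmWwN, if_neg (by simp), if_neg (by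
          rw [valW, valW, sr_pW_inl]
          push_neg
          exact hpW (I.dst ez) ez)]
      have hWgen : ∀ w ∉ ({Sum.inl (I.dst exy), Sum.inl (I.dst ez), Sum.inr 0} :
          Finset (W ⊕ Fin 2)), (I.superRed x t exy).supVoteW M' N w = 0 := by
        intro w hw
        simp only [Finset.mem_insert, Finset.mem_singleton, not_or] at hw
        apply supVoteW_zero'
        apply mW_congr'
        intro f hdf
        constructor
        · intro hf
          refine Finset.mem_insert_of_mem (Finset.mem_insert_of_mem ?_)
          refine Finset.mem_filter.mpr ⟨hf, ?_, ?_, ?_⟩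
          · intro hsfx
            rcases sr_src_eq_inl I x t exy hsfx with ⟨e, rfl, he⟩ | ⟨_, rfl⟩ | ⟨_, rfl⟩
            · have he' := hleaf e he
              subst he'
              rw [sr_dst_inl] at hdf
              exact hw.1 hdf.symm
            · exact h0 hf
            · exact h2 hf
          · intro hsfz
            rcases sr_src_eq_inl I x t exy hsfz with ⟨e, rfl, he⟩ | ⟨hzx', rfl⟩ | ⟨_, rfl⟩
            · have he' := hzuniq e hf he
              subst he'
              rw [sr_dst_inl] at hdf
              exact hw.2.1 hdf.symm
            · exact hzx hzx'
            · exact h2 hf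
          · intro hd0
            exact hw.2.2 (hdf.symm.trans hd0)
        · intro hf
          rcases Finset.mem_insert.mp hf with rfl | hf'
          · rw [sr_dst_inl, hy] at hdf
            exact absurd hdf.symm hw.1
          · rcases Finset.mem_insert.mp hf' with rfl | hf''
            · exact absurd hdf.symm hw.2.2
            · exact hBsub hf''
      have hWsum : ∑ w, (I.superRed x t exy).supVoteW M' N w =
          (I.superRed x t exy).supVoteW M' N (Sum.inl (I.dst exy)) +
          (I.superRed x t exy).supVoteW M' N (Sum.inl (I.dst ez)) +
          (I.superRed x t exy).supVoteW M' N (Sum.inr 0) := by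
        rw [sum_votes_eq' _ _ hWgen, Finset.sum_insert (by
            simp only [Finset.mem_insert, Finset.mem_singleton]
            push_neg
            exact ⟨by simpa using Ne.symm hwzy, by simp⟩),
          Finset.sum_pair (by simp)]
        ring
      have hfin := hpop N hNm
      rw [hUsum, hWsum, vx, vz, vy, vw, vdx] at hfin
      linarith
    · push_neg at hzm
      have hmUzM : (I.superRed x t exy).mU M' (Sum.inl z) = none := by
        apply mU_eq_none'
        intro f hf hs
        rcases sr_src_eq_inl I x t exy hs with ⟨e, rfl, he⟩ | ⟨hzx', rfl⟩ | ⟨_, rfl⟩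
        · exact hzm e hf he
        · exact hzx hzx'
        · exact h2 hf
      have vz : (I.superRed x t exy).supVoteU M' N (Sum.inl z) = -1 := by
        rw [supVoteU, hmUzM, hmUzN, if_neg (by simp),
          if_pos (by rw [valU, valU]; exact hzval0)]
      have hWgen : ∀ w ∉ ({Sum.inl (I.dst exy), Sum.inr 0} :
          Finset (W ⊕ Fin 2)), (I.superRed x t exy).supVoteW M' N w = 0 := by
        intro w hw
        simp only [Finset.mem_insert, Finset.mem_singleton, not_or] at hw
        apply supVoteW_zero'
        apply mW_congr'
        intro f hdf
        constructor
        · intro hf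
          refine Finset.mem_insert_of_mem (Finset.mem_insert_of_mem ?_)
          refine Finset.mem_filter.mpr ⟨hf, ?_, ?_, ?_⟩
          · intro hsfx
            rcases sr_src_eq_inl I x t exy hsfx with ⟨e, rfl, he⟩ | ⟨_, rfl⟩ | ⟨_, rfl⟩
            · have he' := hleaf e he
              subst he'
              rw [sr_dst_inl] at hdf
              exact hw.1 hdf.symm
            · exact h0 hf
            · exact h2 hf
          · intro hsfz
            rcases sr_src_eq_inl I x t exy hsfz with ⟨e, rfl, he⟩ | ⟨hzx', rfl⟩ | ⟨_, rfl⟩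
            · exact hzm e hf he
            · exact hzx hzx'
            · exact h2 hf
          · intro hd0
            exact hw.2 (hdf.symm.trans hd0)
        · intro hf
          rcases Finset.mem_insert.mp hf with rfl | hf'
          · rw [sr_dst_inl, hy] at hdf
            exact absurd hdf.symm hw.1
          · rcases Finset.mem_insert.mp hf' with rfl | hf''
            · exact absurd hdf.symm hw.2
            · exact hBsub hf''
      have hWsum : ∑ w, (I.superRed x t exy).supVoteW M' N w =
          (I.superRed x t exy).supVoteW M' N (Sum.inl (I.dst exy)) +
          (I.superRed x t exy).supVoteW M' N (Sum.inr 0) := by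
        rw [sum_votes_eq' _ _ hWgen, Finset.sum_pair (by simp)]
      have hfin := hpop N hNm
      rw [hUsum, hWsum, vx, vz, vy, vdx] at hfin
      linarith
  -- Step E : Sum.inr 0 ∈ M'
  have hE : (Sum.inr 0 : E ⊕ Fin 4) ∈ M' := by
    by_contra h0
    have hxnone : ∀ f ∈ M', (I.superRed x t exy).src f ≠ Sum.inl x := by
      intro f hf hs
      rcases sr_src_eq_inl I x t exy hs with ⟨e, rfl, he⟩ | ⟨_, rfl⟩ | ⟨hxt', rfl⟩
      · have he' := hleaf e he
        subst he'
        exact hD hf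
      · exact h0 hf
      · exact hxt hxt'
    set N := insert (Sum.inr 0 : E ⊕ Fin 4) (M'.erase (Sum.inr 1)) with hN
    have hsub : M'.erase (Sum.inr 1) ⊆ M' := Finset.erase_subset _ _
    have hNm : (I.superRed x t exy).IsMatching N := by
      apply isMatching_insert' (isMatching_subset' hsub hM')
      intro f hf
      constructor
      · intro hs
        exact hxnone f (hsub hf) hs
      · intro hd
        rcases sr_dst_eq_inr0 I x t exy hd with rfl | rfl
        · exact h0 (hsub hf)
        · exact (Finset.mem_erase.mp hf).1 rfl
    have hmUxM : (I.superRed x t exy).mU M' (Sum.inl x) = none := mU_eq_none' hxnone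
    have hmUxN : (I.superRed x t exy).mU N (Sum.inl x) = some (Sum.inr 0) :=
      mU_eq_some' hNm (Finset.mem_insert_self _ _) rfl
    have hmWdxN : (I.superRed x t exy).mW N (Sum.inr 0) = some (Sum.inr 0) :=
      mW_eq_some' hNm (Finset.mem_insert_self _ _) rfl
    have hmWdxM : (I.superRed x t exy).mW M' (Sum.inr 0) = none ∨
        (I.superRed x t exy).mW M' (Sum.inr 0) = some (Sum.inr 1) := by
      by_cases h1 : (Sum.inr 1 : E ⊕ Fin 4) ∈ M'
      · right; exact mW_eq_some' hM' h1 rfl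
      · left
        apply mW_eq_none'
        intro f hf hd
        rcases sr_dst_eq_inr0 I x t exy hd with rfl | rfl
        · exact h0 hf
        · exact h1 hf
    have vx : (I.superRed x t exy).supVoteU M' N (Sum.inl x) = -1 := by
      rw [supVoteU, hmUxM, hmUxN, if_neg (by simp), if_pos (by
        rw [valU, valU, sr_pU_x_0]
        linarith [hpU x exy])]
    have vdx : (I.superRed x t exy).supVoteW M' N (Sum.inr 0) = -1 := by
      rcases hmWdxM with h | h <;>
        rw [supVoteW, h, hmWdxN, if_neg (by simp),
          if_pos (by norm_num [valW, sr_pW_dx_0, sr_pW_dx_1])]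
    have hUgen : ∀ u ∉ ({Sum.inl x, Sum.inr 0} : Finset (U ⊕ Fin 2)),
        (I.superRed x t exy).supVoteU M' N u = 0 := by
      intro u hu
      simp only [Finset.mem_insert, Finset.mem_singleton, not_or] at hu
      apply supVoteU_zero'
      apply mU_congr'
      intro f hsf
      have hf0 : f ≠ Sum.inr 0 := by rintro rfl; exact hu.1 hsf.symm
      have hf1 : f ≠ Sum.inr 1 := by rintro rfl; exact hu.2 hsf.symm
      simp [hN, Finset.mem_insert, Finset.mem_erase, hf0, hf1]
    have hWgen : ∀ w ∉ ({Sum.inr 0} : Finset (W ⊕ Fin 2)),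
        (I.superRed x t exy).supVoteW M' N w = 0 := by
      intro w hw
      simp only [Finset.mem_singleton] at hw
      apply supVoteW_zero'
      apply mW_congr'
      intro f hdf
      have hf0 : f ≠ Sum.inr 0 := by rintro rfl; exact hw hdf.symm
      have hf1 : f ≠ Sum.inr 1 := by rintro rfl; exact hw hdf.symm
      simp [hN, Finset.mem_insert, Finset.mem_erase, hf0, hf1]
    have hUsum : ∑ u, (I.superRed x t exy).supVoteU M' N u =
        (I.superRed x t exy).supVoteU M' N (Sum.inl x) +
        (I.superRed x t exy).supVoteU M' N (Sum.inr 0) := by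
      rw [sum_votes_eq' _ _ hUgen, Finset.sum_pair (by simp)]
    have hWsum : ∑ w, (I.superRed x t exy).supVoteW M' N w =
        (I.superRed x t exy).supVoteW M' N (Sum.inr 0) := by
      rw [sum_votes_eq' _ _ hWgen, Finset.sum_singleton]
    have hbx' := supVoteU_le_one' (I.superRed x t exy) M' N (Sum.inr 0)
    have hfin := hpop N hNm
    rw [hUsum, hWsum, vx, vdx] at hfin
    linarith
  exact ⟨hC, hD, h3, hE⟩
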